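/- arXiv:1406.4432 — 4 statements merged into one kernel-verified Lean document; each statement's English description precedes it below -/
import Mathlib

section
/- Let $(\Upsilon_j)_{j\in\mathbb{N}}$ be non-negative reals and let $(\mathbb{A}_\nu)$, $(\mathbb{B}_\nu)$ be non-negative reals indexed by finitely supported multi-indices $\nu \in \mathfrak{F}$ satisfying $\mathbb{A}_\nu \le \sum_{j \in \mathrm{supp}(\nu)} \nu_j \Upsilon_j \mathbb{A}_{\nu - e_j} + \mathbb{B}_\nu$ for all $\nu$ (including $\nu = 0$). Then for every $\nu \in \mathfrak{F}$, $\mathbb{A}_\nu \le \sum_{m \le \nu} \binom{\nu}{m} |m|! \, \Upsilon^m \, \mathbb{B}_{\nu - m}$, where $\binom{\nu}{m} = \prod_{j} \binom{\nu_j}{m_j}$, $|m| = \sum_j m_j$, and $\Upsilon^m = \prod_j \Upsilon_j^{m_j}$. -/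
/-!
Write `c ν m = binom(ν, m) |m|! Υ^m` and `S ν = ∑_{m ≤ ν} c ν m B (ν - m)`. From
`ν_j binom(ν - e_j, m - e_j) = m_j binom(ν, m)` and `∑_j m_j = |m|` one gets the Pascal-type
identity `c ν m = [m = 0] + ∑_{j ∈ supp m} ν_j Υ_j c (ν - e_j) (m - e_j)`, and substituting
`m = μ + e_j` shows that `S` satisfies the recursion with equality. As the coefficients
`ν_j Υ_j` are nonnegative, well-founded induction on `ν` then gives `A ν ≤ S ν`.
-/

open Finset Finsupp Nat

theorem Finset.mul_prod_eq_mul_prod_of_eq_off {ι M : Type*} [CommMonoid M] {s : Finset ι}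
    {f g : ι → M} {a b : M} {j : ι} (hj : j ∈ s) (hab : a * f j = b * g j)
    (hfg : ∀ k ∈ s, k ≠ j → f k = g k) :
    a * ∏ k ∈ s, f k = b * ∏ k ∈ s, g k := by
  classical
  rw [← mul_prod_erase s f hj, ← mul_prod_erase s g hj, ← mul_assoc, ← mul_assoc, hab,
    prod_congr rfl fun k hk => hfg k (mem_of_mem_erase hk) (ne_of_mem_erase hk)]

theorem Finset.sum_Icc_eq_sum_Iic_add {α M : Type*} [AddCommMonoid α] [PartialOrder α]
    [CanonicallyOrderedAdd α] [IsOrderedCancelAddMonoid α] [Sub α] [OrderedSub α]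
    [LocallyFiniteOrder α] [OrderBot α] [AddCommMonoid M] {a b : α} (hab : a ≤ b) (f : α → M) :
    ∑ x ∈ Icc a b, f x = ∑ y ∈ Iic (b - a), f (y + a) := by
  have hIcc : Icc a b = (Iic (b - a)).map (addRightEmbedding a) := by
    rw [← Icc_bot, map_add_right_Icc, bot_le.antisymm zero_le, zero_add, tsub_add_cancel_of_le hab]
  rw [hIcc, sum_map]
  rfl

theorem Finsupp.single_one_le_iff_mem_support {ι : Type*} {ν : ι →₀ ℕ} {j : ι} :
    single j 1 ≤ ν ↔ j ∈ ν.support :=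
  single_le_iff.trans (Nat.one_le_iff_ne_zero.trans mem_support_iff.symm)

theorem Finsupp.sub_single_one_lt {ι : Type*} {ν : ι →₀ ℕ} {j : ι} (hj : j ∈ ν.support) :
    ν - single j 1 < ν :=
  calc ν - single j 1 < ν - single j 1 + single j 1 :=
      lt_add_of_pos_right _ (pos_iff_ne_zero.mpr (single_ne_zero.mpr one_ne_zero))
    _ = ν := tsub_add_cancel_of_le (single_one_le_iff_mem_support.mpr hj)

section

variable {ι : Type*}

def multiChoose (ν m : ι →₀ ℕ) : ℕ := ∏ j ∈ ν.support, (ν j).choose (m j)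

theorem multiChoose_eq_prod_of_le {ν m : ι →₀ ℕ} (hmν : m ≤ ν) {s : Finset ι}
    (hs : ν.support ⊆ s) : multiChoose ν m = ∏ j ∈ s, (ν j).choose (m j) :=
  prod_subset hs fun j _ hj => by
    have hν : ν j = 0 := notMem_support_iff.mp hj
    have hm : m j = 0 := Nat.eq_zero_of_le_zero (hν ▸ hmν j)
    simp [hν, hm]

theorem add_one_mul_multiChoose {η μ : ι →₀ ℕ} (hμη : μ ≤ η) (j : ι) :
    (η j + 1) * multiChoose η μ =
      (μ j + 1) * multiChoose (η + single j 1) (μ + single j 1) := by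
  set s := (η + single j 1).support
  rw [multiChoose_eq_prod_of_le hμη (s := s) (support_mono le_self_add),
    multiChoose_eq_prod_of_le (add_le_add hμη le_rfl) (s := s) subset_rfl]
  refine mul_prod_eq_mul_prod_of_eq_off (j := j) (by simp [s]) ?_ fun k _ hkj => ?_
  · simp only [Finsupp.add_apply, single_eq_same]
    rw [add_one_mul_choose_eq, mul_comm]
  · simp [Ne.symm hkj]

noncomputable def boundCoeff (Υ : ι → ℝ) (ν m : ι →₀ ℕ) : ℝ :=
  multiChoose ν m * (m.degree)! * m.prod fun j n => Υ j ^ n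

theorem boundCoeff_zero_right (Υ : ι → ℝ) (ν : ι →₀ ℕ) : boundCoeff Υ ν 0 = 1 := by
  simp [boundCoeff, multiChoose]

theorem mul_boundCoeff_sub_single (Υ : ι → ℝ) {ν m : ι →₀ ℕ} (hmν : m ≤ ν) {j : ι}
    (hj : j ∈ m.support) :
    ν j * Υ j * boundCoeff Υ (ν - single j 1) (m - single j 1) =
      m j * (multiChoose ν m * (m.degree - 1)! * m.prod fun k n => Υ k ^ n) := by
  have hjm : single j 1 ≤ m := single_one_le_iff_mem_support.mpr hj
  obtain ⟨μ, rfl⟩ : ∃ μ, m = μ + single j 1 := ⟨m - single j 1, (tsub_add_cancel_of_le hjm).symm⟩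
  obtain ⟨η, rfl⟩ : ∃ η, ν = η + single j 1 :=
    ⟨ν - single j 1, (tsub_add_cancel_of_le (hjm.trans hmν)).symm⟩
  have hchoose : ((η j + 1 : ℕ) : ℝ) * multiChoose η μ =
      ((μ j + 1 : ℕ) : ℝ) * multiChoose (η + single j 1) (μ + single j 1) := by
    exact_mod_cast add_one_mul_multiChoose (le_of_add_le_add_right hmν) j
  have hprod : (μ + single j 1).prod (fun k n => Υ k ^ n) = (μ.prod fun k n => Υ k ^ n) * Υ j := by
    rw [prod_add_index' (h := fun k n => Υ k ^ n) (fun _ => pow_zero _)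
        (fun _ _ _ => pow_add _ _ _),
      prod_single_index (h := fun k n => Υ k ^ n) (pow_zero _), pow_one]
  simp only [boundCoeff, add_tsub_cancel_right, map_add, degree_single, Finsupp.add_apply,
    single_eq_same, hprod]
  push_cast at hchoose ⊢
  linear_combination (Υ j * (μ.degree)! * μ.prod fun k n => Υ k ^ n) * hchoose

variable [DecidableEq ι]

theorem boundCoeff_eq_ite_add_sum (Υ : ι → ℝ) {ν m : ι →₀ ℕ} (hmν : m ≤ ν) :
    boundCoeff Υ ν m = (if m = 0 then 1 else 0) +
      ∑ j ∈ m.support, ν j * Υ j * boundCoeff Υ (ν - single j 1) (m - single j 1) := by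
  rcases eq_or_ne m 0 with rfl | hm
  · simp [boundCoeff_zero_right]
  have hdeg : m.degree ≠ 0 := (degree_eq_zero_iff m).not.mpr hm
  rw [if_neg hm, zero_add, sum_congr rfl fun j hj => mul_boundCoeff_sub_single Υ hmν hj,
    ← Finset.sum_mul, ← Nat.cast_sum, ← degree_apply, boundCoeff, ← Nat.mul_factorial_pred hdeg]
  push_cast
  ring

noncomputable def boundSum (Υ : ι → ℝ) (B : (ι →₀ ℕ) → ℝ) (ν : ι →₀ ℕ) : ℝ :=
  ∑ m ∈ Iic ν, boundCoeff Υ ν m * B (ν - m)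

theorem boundSum_eq_sum_add (Υ : ι → ℝ) (B : (ι →₀ ℕ) → ℝ) (ν : ι →₀ ℕ) :
    boundSum Υ B ν = (∑ j ∈ ν.support, ν j * Υ j * boundSum Υ B (ν - single j 1)) + B ν := by
  have hswap : ∀ m j, m ∈ Iic ν ∧ j ∈ m.support ↔ m ∈ Icc (single j 1) ν ∧ j ∈ ν.support := by
    intro m j
    simp only [mem_Iic, mem_Icc, single_one_le_iff_mem_support]
    exact ⟨fun ⟨hmν, hj⟩ => ⟨⟨hj, hmν⟩, support_mono hmν hj⟩, fun ⟨⟨hj, hmν⟩, _⟩ => ⟨hmν, hj⟩⟩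
  calc boundSum Υ B ν
      = ∑ m ∈ Iic ν, ((if m = 0 then B ν else 0) + ∑ j ∈ m.support,
          ν j * Υ j * boundCoeff Υ (ν - single j 1) (m - single j 1) * B (ν - m)) := by
        refine sum_congr rfl fun m hm => ?_
        rw [boundCoeff_eq_ite_add_sum Υ (mem_Iic.mp hm), add_mul, Finset.sum_mul]
        split_ifs with h <;> simp [h]
    _ = B ν + ∑ j ∈ ν.support, ∑ m ∈ Icc (single j 1) ν,
          ν j * Υ j * boundCoeff Υ (ν - single j 1) (m - single j 1) * B (ν - m) := by
        rw [sum_add_distrib, Finset.sum_ite_eq', if_pos (mem_Iic.mpr zero_le), sum_comm' hswap]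
    _ = B ν + ∑ j ∈ ν.support, ν j * Υ j * boundSum Υ B (ν - single j 1) := by
        congr 1
        refine sum_congr rfl fun j hj => ?_
        rw [sum_Icc_eq_sum_Iic_add (single_one_le_iff_mem_support.mpr hj), boundSum, Finset.mul_sum]
        refine sum_congr rfl fun μ _ => ?_
        rw [add_tsub_cancel_right, mul_assoc, tsub_tsub, add_comm μ]
    _ = _ := add_comm _ _

end

theorem multiindex_recursion_bound_general
    (Υ : ℕ → ℝ) (A B : (ℕ →₀ ℕ) → ℝ)
    (hΥ : ∀ j, 0 ≤ Υ j)
    (hrec : ∀ ν : ℕ →₀ ℕ,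
      A ν ≤ (∑ j ∈ ν.support, (ν j : ℝ) * Υ j * A (ν - Finsupp.single j 1)) + B ν) :
    ∀ ν : ℕ →₀ ℕ,
      A ν ≤ ∑ m ∈ Finset.Iic ν,
        ((∏ j ∈ ν.support, (ν j).choose (m j) : ℕ) : ℝ) *
        (Nat.factorial (m.sum fun _ n => n) : ℝ) *
        (∏ j ∈ m.support, Υ j ^ m j) * B (ν - m) := by
  intro ν
  show A ν ≤ boundSum Υ B ν
  induction ν using WellFoundedLT.induction with
  | _ ν ih =>
  calc A ν ≤ (∑ j ∈ ν.support, (ν j : ℝ) * Υ j * A (ν - single j 1)) + B ν := hrec ν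
    _ ≤ (∑ j ∈ ν.support, (ν j : ℝ) * Υ j * boundSum Υ B (ν - single j 1)) + B ν := by
      gcongr with j hj
      · exact mul_nonneg (Nat.cast_nonneg _) (hΥ j)
      · exact ih _ (sub_single_one_lt hj)
    _ = boundSum Υ B ν := (boundSum_eq_sum_add Υ B ν).symm

/-- Lemma (recursion bound for multi-index sequences): if
`A ν ≤ ∑_{j ∈ supp ν} ν_j Υ_j A_{ν - e_j} + B ν` for all finitely supported
multi-indices `ν`, then `A ν ≤ ∑_{m ≤ ν} binom(ν,m) |m|! Υ^m B_{ν-m}`. -/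
theorem multiindex_recursion_bound
    (Υ : ℕ → ℝ) (A B : (ℕ →₀ ℕ) → ℝ)
    (hΥ : ∀ j, 0 ≤ Υ j) (hA : ∀ ν, 0 ≤ A ν) (hB : ∀ ν, 0 ≤ B ν)
    (hrec : ∀ ν : ℕ →₀ ℕ,
      A ν ≤ (∑ j ∈ ν.support, (ν j : ℝ) * Υ j * A (ν - Finsupp.single j 1)) + B ν) :
    ∀ ν : ℕ →₀ ℕ,
      A ν ≤ ∑ m ∈ Finset.Iic ν,
        ((∏ j ∈ ν.support, (ν j).choose (m j) : ℕ) : ℝ) *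
        (Nat.factorial (m.sum fun _ n => n) : ℝ) *
        (∏ j ∈ m.support, Υ j ^ m j) * B (ν - m) :=
  multiindex_recursion_bound_general Υ A B hΥ hrec
end

section
/- For any finitely supported multi-index $m \in \mathbb{N}_0^{\mathbb{N}}$, one has $\sum_{m' \le m} \binom{m}{m'} |m'|! \, |m - m'|! = (|m| + 1)!$, where $\binom{m}{m'} = \prod_j \binom{m_j}{m'_j}$ and $|m| = \sum_j m_j$. -/
/-!
Grouping the multi-indices `m' ≤ m` by `k = |m'|`, the multivariate Vandermonde identity
`∑_{|m'| = k} ∏ⱼ C(mⱼ, m'ⱼ) = C(|m|, k)` (compare the coefficients of `x ^ k` in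
`∏ⱼ (1 + x) ^ mⱼ = (1 + x) ^ |m|`) turns each of the `|m| + 1` groups into
`C(|m|, k) k! (|m| - k)! = |m|!`.
-/

open Finset

theorem PowerSeries.coeff_X_add_one_pow (R : Type*) [Semiring R] (a b : ℕ) :
    coeff b ((X + 1 : PowerSeries R) ^ a) = a.choose b := by
  rw [← Polynomial.coe_X, ← Polynomial.coe_one, ← Polynomial.coe_add, ← Polynomial.coe_pow,
    Polynomial.coeff_coe, Polynomial.coeff_X_add_one_pow]

theorem Nat.finset_sum_choose_eq {ι : Type*} [DecidableEq ι] (s : Finset ι) (n : ι → ℕ) (k : ℕ) :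
    (∑ i ∈ s, n i).choose k = ∑ l ∈ s.finsuppAntidiag k, ∏ i ∈ s, (n i).choose (l i) := by
  have := PowerSeries.coeff_prod (fun i ↦ (PowerSeries.X + 1 : PowerSeries ℕ) ^ n i) k s
  simpa only [prod_pow_eq_pow_sum, PowerSeries.coeff_X_add_one_pow, Nat.cast_id] using this

namespace Finsupp

variable {ι : Type*}

theorem degree_tsub_of_le {m m' : ι →₀ ℕ} (h : m' ≤ m) :
    degree (m - m') = degree m - degree m' := by
  have := congrArg degree (add_tsub_cancel_of_le h)
  rw [map_add] at this
  omega

theorem sum_Iic_filter_degree_prod_choose [DecidableEq ι] (m : ι →₀ ℕ) (k : ℕ) :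
    ∑ m' ∈ Iic m with degree m' = k, ∏ j ∈ m.support, (m j).choose (m' j)
      = (degree m).choose k := by
  rw [degree_apply, Nat.finset_sum_choose_eq]
  refine (Finset.sum_congr ?_ fun _ _ ↦ rfl).trans (sum_filter_of_ne (p := (· ≤ m)) ?_)
  · ext l
    simp only [mem_filter, mem_finsuppAntidiag', mem_Iic]
    exact ⟨fun ⟨hlm, hl⟩ ↦ ⟨⟨hl, support_mono hlm⟩, hlm⟩, fun ⟨⟨hl, _⟩, hlm⟩ ↦ ⟨hlm, hl⟩⟩
  · intro l hl hne
    contrapose! hne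
    obtain ⟨j, hj⟩ := not_forall.1 hne
    have hj_supp : j ∈ m.support := (mem_finsuppAntidiag'.1 hl).2 (mem_support_iff.2 (by omega))
    exact prod_eq_zero hj_supp (Nat.choose_eq_zero_of_lt (not_le.1 hj))

end Finsupp

open Finsupp in
/-- For any finitely supported multi-index `m`,
`∑_{m' ≤ m} binom(m, m') |m'|! |m - m'|! = (|m| + 1)!`. -/
theorem multiindex_factorial_sum (m : ℕ →₀ ℕ) :
    ∑ m' ∈ Finset.Iic m,
      (∏ j ∈ m.support, (m j).choose (m' j)) *
      Nat.factorial (m'.sum fun _ n => n) *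
      Nat.factorial ((m - m').sum fun _ n => n)
    = Nat.factorial ((m.sum fun _ n => n) + 1) := by
  change ∑ m' ∈ Iic m, (∏ j ∈ m.support, (m j).choose (m' j)) * (degree m').factorial *
    (degree (m - m')).factorial = (degree m + 1).factorial
  set n := degree m
  have hmaps : ∀ m' ∈ Iic m, degree m' ∈ range (n + 1) := fun m' hm' ↦
    mem_range.2 (Nat.lt_succ_of_le (degree_mono (mem_Iic.1 hm')))
  have hfiber : ∀ k ∈ range (n + 1), ∑ m' ∈ Iic m with degree m' = k,
      (∏ j ∈ m.support, (m j).choose (m' j)) * (degree m').factorial *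
        (degree (m - m')).factorial = n.factorial := by
    intro k hk
    calc _ = ∑ m' ∈ Iic m with degree m' = k,
          (∏ j ∈ m.support, (m j).choose (m' j)) * k.factorial * (n - k).factorial := by
          refine sum_congr rfl fun m' hm' ↦ ?_
          obtain ⟨hm'm, rfl⟩ := mem_filter.1 hm'
          rw [degree_tsub_of_le (mem_Iic.1 hm'm)]
      _ = n.choose k * k.factorial * (n - k).factorial := by
          rw [← Finset.sum_mul, ← Finset.sum_mul, sum_Iic_filter_degree_prod_choose]
      _ = n.factorial :=
          Nat.choose_mul_factorial_mul_factorial (Nat.lt_succ_iff.1 (mem_range.1 hk))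
  rw [← sum_fiberwise_of_maps_to hmaps, sum_congr rfl hfiber, sum_const, card_range, smul_eq_mul,
    Nat.factorial_succ]
end

section
/- For any finitely supported multi-index $\nu \in \mathbb{N}_0^{\mathbb{N}}$, one has $\sum_{m \le \nu} \binom{\nu}{m} (|m|+1)! \, (|\nu - m| + 1)! = (|\nu| + 3)!/6$. -/
/-!
Expanding `∏ j, (X + 1) ^ ν j = (X + 1) ^ |ν|` and comparing coefficients gives the multivariate
Vandermonde identity `∑_{m ≤ ν, |m| = k} binom(ν, m) = binom(|ν|, k)`. Since `|ν - m| = |ν| - |m|`,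
the sum collapses to `∑_{i + j = n} binom(n, i) (i+1)! (j+1)! = n! ∑_{i + j = n} (i+1)(j+1)`, and
the last sum is `binom(n + 3, 3)` by induction on `n` and the hockey-stick identity.
-/

open Finset Polynomial Nat

section

variable {ι : Type*}

theorem Finsupp.sum_Icc_prod_eq_prod_sum_Icc {α R : Type*} [DecidableEq ι] [Zero α]
    [PartialOrder α] [LocallyFiniteOrder α] [DecidableEq α] [CommSemiring R] (f g : ι →₀ α)
    (h : ι → α → R) :
    ∑ m ∈ Icc f g, ∏ j ∈ f.support ∪ g.support, h j (m j) =
      ∏ j ∈ f.support ∪ g.support, ∑ a ∈ Icc (f j) (g j), h j a := by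
  rw [Finsupp.Icc_eq, prod_sum, Finset.finsupp, sum_map]
  -- `congr!` identifies the classical and the given decidability instances of `Finset.pi`
  refine Finset.sum_congr (by congr!) fun p _ => ?_
  rw [← prod_attach]
  exact Finset.prod_congr rfl fun j _ => by simp [Finsupp.indicator_of_mem j.2]

theorem Finsupp.sum_Iic_prod_eq_prod_sum_Iic {α R : Type*} [DecidableEq ι] [AddCommMonoid α]
    [PartialOrder α] [IsBotZeroClass α] [OrderBot α] [LocallyFiniteOrder α] [DecidableEq α]
    [CommSemiring R] (ν : ι →₀ α) (h : ι → α → R) :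
    ∑ m ∈ Iic ν, ∏ j ∈ ν.support, h j (m j) = ∏ j ∈ ν.support, ∑ a ∈ Iic (ν j), h j a := by
  simpa [Iic_eq_Icc, bot_eq_zero] using sum_Icc_prod_eq_prod_sum_Icc 0 ν h

theorem Finsupp.degree_eq_sum_of_support_subset {R : Type*} [AddCommMonoid R] {m : ι →₀ R}
    {s : Finset ι} (h : m.support ⊆ s) : m.degree = ∑ j ∈ s, m j :=
  sum_subset h fun _ _ hj => notMem_support_iff.mp hj

theorem Finsupp.degree_tsub_of_le_s3 {m ν : ι →₀ ℕ} (h : m ≤ ν) :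
    (ν - m).degree = ν.degree - m.degree := by
  rw [← add_tsub_cancel_of_le h, map_add, add_tsub_cancel_left, add_tsub_cancel_left]

theorem Finsupp.sum_Iic_prod_choose_mul_X_pow [DecidableEq ι] (ν : ι →₀ ℕ) :
    ∑ m ∈ Iic ν, C (∏ j ∈ ν.support, (ν j).choose (m j)) * (X : ℕ[X]) ^ m.degree =
      (X + 1) ^ ν.degree := by
  have hterm : ∀ m ∈ Iic ν, C (∏ j ∈ ν.support, (ν j).choose (m j)) * (X : ℕ[X]) ^ m.degree =
      ∏ j ∈ ν.support, C ((ν j).choose (m j)) * X ^ m j := by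
    intro m hm
    rw [degree_eq_sum_of_support_subset (support_mono (mem_Iic.mp hm)),
      ← prod_pow_eq_pow_sum, map_prod, prod_mul_distrib]
  rw [Finset.sum_congr rfl hterm,
    sum_Iic_prod_eq_prod_sum_Iic ν fun j a => C ((ν j).choose a) * X ^ a, degree_apply,
    ← prod_pow_eq_pow_sum]
  refine Finset.prod_congr rfl fun j _ => ?_
  rw [add_pow, Finset.Iic_eq_Icc, Nat.bot_eq_zero, ← Nat.range_succ_eq_Icc_zero]
  refine Finset.sum_congr rfl fun k _ => ?_
  simp [mul_comm]

theorem Finsupp.sum_Iic_prod_choose_filter_degree [DecidableEq ι] (ν : ι →₀ ℕ) (k : ℕ) :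
    ∑ m ∈ Iic ν with m.degree = k, ∏ j ∈ ν.support, (ν j).choose (m j) = ν.degree.choose k := by
  rw [← Nat.cast_id (ν.degree.choose k), ← coeff_X_add_one_pow ℕ, ← sum_Iic_prod_choose_mul_X_pow,
    finsetSum_coeff, sum_filter]
  exact Finset.sum_congr rfl fun m _ => by rw [coeff_C_mul_X_pow]; exact if_congr eq_comm rfl rfl

theorem Finsupp.sum_Iic_prod_choose_smul [DecidableEq ι] {M : Type*} [AddCommMonoid M]
    (ν : ι →₀ ℕ) (F : ℕ → ℕ → M) :
    ∑ m ∈ Iic ν, (∏ j ∈ ν.support, (ν j).choose (m j)) • F m.degree (ν - m).degree =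
      ∑ ij ∈ antidiagonal ν.degree, ν.degree.choose ij.1 • F ij.1 ij.2 := by
  have hcompl : ∀ m ∈ Iic ν, (ν - m).degree = ν.degree - m.degree := fun m hm =>
    degree_tsub_of_le_s3 (mem_Iic.mp hm)
  have hmaps : ∀ m ∈ Iic ν, m.degree ∈ range (ν.degree + 1) := fun m hm =>
    mem_range_succ_iff.mpr (degree_mono (mem_Iic.mp hm))
  rw [Finset.sum_congr rfl fun m hm => by rw [hcompl m hm], Nat.sum_antidiagonal_eq_sum_range_succ
    (fun i j => ν.degree.choose i • F i j), ← sum_fiberwise_of_maps_to hmaps]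
  refine Finset.sum_congr rfl fun k _ => ?_
  rw [← sum_Iic_prod_choose_filter_degree ν k, sum_smul]
  exact Finset.sum_congr rfl fun m hm => by rw [(mem_filter.mp hm).2]

end

theorem Nat.sum_antidiagonal_succ_mul_succ (n : ℕ) :
    ∑ ij ∈ antidiagonal n, (ij.1 + 1) * (ij.2 + 1) = (n + 3).choose 3 := by
  induction n with
  | zero => simp
  | succ n ih =>
    have hsplit : ∀ ij ∈ antidiagonal n, (ij.1 + 1 + 1) * (ij.2 + 1) =
        (ij.1 + 1) * (ij.2 + 1) + (1 + ij.2).choose 1 := fun ij _ => by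
      rw [choose_one_right]; ring
    have h3 : (n + 1 + 3).choose 3 = (n + 3).choose 2 + (n + 3).choose 3 :=
      choose_succ_succ' (n + 3) 2
    have h2 : (n + 3).choose 2 = (n + 2).choose 1 + (n + 2).choose 2 :=
      choose_succ_succ' (n + 2) 1
    rw [sum_antidiagonal_succ, Finset.sum_congr rfl hsplit, sum_add_distrib, ih,
      sum_antidiagonal_choose_add, h3, h2, choose_one_right, show 1 + n + 1 = n + 2 by ring]
    ring

theorem Nat.sum_antidiagonal_choose_mul_factorial_succ_mul_factorial_succ (n : ℕ) :
    ∑ ij ∈ antidiagonal n, n.choose ij.1 * ((ij.1 + 1)! * (ij.2 + 1)!) =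
      n ! * (n + 3).choose 3 := by
  rw [← sum_antidiagonal_succ_mul_succ, mul_sum]
  refine Finset.sum_congr rfl fun ij hij => ?_
  rw [← mem_antidiagonal.mp hij, ← add_choose_mul_factorial_mul_factorial ij.1 ij.2,
    choose_symm_add, factorial_succ, factorial_succ]
  ring

/-- For any finitely supported multi-index `ν`,
`∑_{m ≤ ν} binom(ν,m) (|m|+1)! (|ν-m|+1)! = (|ν|+3)!/6`. -/
theorem multiindex_factorial_sum_shifted (ν : ℕ →₀ ℕ) :
    ∑ m ∈ Finset.Iic ν,
      ((∏ j ∈ ν.support, (ν j).choose (m j) : ℕ) : ℝ) *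
      (Nat.factorial ((m.sum fun _ n => n) + 1) : ℝ) *
      (Nat.factorial (((ν - m).sum fun _ n => n) + 1) : ℝ)
    = (Nat.factorial ((ν.sum fun _ n => n) + 3) : ℝ) / 6 := by
  have hdeg : ∀ d : ℕ →₀ ℕ, (d.sum fun _ n => n) = d.degree := fun _ => rfl
  have hsum := Finsupp.sum_Iic_prod_choose_smul ν fun a b => (a + 1)! * (b + 1)!
  simp only [smul_eq_mul, sum_antidiagonal_choose_mul_factorial_succ_mul_factorial_succ] at hsum
  have hfact : (ν.degree + 3)! = 6 * (ν.degree ! * (ν.degree + 3).choose 3) := by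
    rw [← add_choose_mul_factorial_mul_factorial ν.degree 3, show 3 ! = 6 from rfl]
    ring
  simp only [hdeg]
  rw [hfact, ← hsum]
  push_cast
  rw [mul_div_cancel_left₀ _ (by norm_num)]
  simp only [mul_assoc]
end

section
/- Let $(\beta_j)_{j \ge 1}$ be a non-increasing sequence of non-negative reals with $\sum_{j \ge 1} \beta_j^{p} < \infty$ for some $0 < p < 1$. Then for every $s \in \mathbb{N}$, the tail sum satisfies $\sum_{j \ge s+1} \beta_j \le \min\left(\frac{1}{1/p - 1}, 1\right) \left(\sum_{j \ge 1} \beta_j^p\right)^{1/p} s^{-(1/p - 1)}$. -/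
/-!
Write `T = ∑ β_j^p` and `r = 1/p - 1`. Monotonicity gives `(j+1) β_j^p ≤ T`, i.e.
`β_j ≤ T^{1/p} (j+1)^{-1/p}`. The constant `1` comes from `β_{s+j} ≤ β_s^{1-p} β_{s+j}^p`, which
bounds the tail by `β_s^{1-p} T`. The constant `1/r` comes from summing the pointwise bound
against the telescoping majorant `(a+1)^{-(r+1)} ≤ (a^{-r} - (a+1)^{-r}) / r`.
-/

open Real

-- Bernoulli's inequality `(1 + 1/a)^(1+r) ≥ 1 + (1+r)/a`, multiplied by `a`.
lemma add_add_le_mul_div_rpow {a : ℝ} (r : ℝ) (ha : 0 < a) (hr : 0 ≤ r) :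
    a + 1 + r ≤ (a + 1) * ((a + 1) / a) ^ r := by
  have hx : 0 < (a + 1) / a := by positivity
  have bernoulli : 1 + (1 + r) * (1 / a) ≤ (1 + 1 / a) ^ (1 + r) :=
    one_add_mul_self_le_rpow_one_add (by linarith [one_div_pos.2 ha]) (by linarith)
  rw [show 1 + 1 / a = (a + 1) / a by field_simp, add_comm 1 r, rpow_add_one hx.ne'] at bernoulli
  have := mul_le_mul_of_nonneg_left bernoulli ha.le
  field_simp at this
  linarith

lemma mul_rpow_neg_add_one_le_rpow_neg_sub {a r : ℝ} (ha : 0 < a) (hr : 0 ≤ r) :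
    r * (a + 1) ^ (-(r + 1)) ≤ a ^ (-r) - (a + 1) ^ (-r) := by
  have ha1 : 0 < a + 1 := by linarith
  set X := (a + 1) ^ (-(r + 1))
  have hX : 0 ≤ X := by positivity
  have hsucc : (a + 1) ^ (-r) = X * (a + 1) := by
    rw [← rpow_add_one ha1.ne']; ring_nf
  have hbase : a ^ (-r) = X * ((a + 1) * ((a + 1) / a) ^ r) := by
    rw [div_rpow ha1.le ha.le, ← mul_assoc, ← hsucc, rpow_neg ha.le, rpow_neg ha1.le]
    field_simp
  rw [hsucc, hbase]
  nlinarith [mul_le_mul_of_nonneg_left (add_add_le_mul_div_rpow r ha hr) hX]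

lemma tsum_le_of_le_sub_succ {f g : ℕ → ℝ} (hf : ∀ n, 0 ≤ f n) (hg : ∀ n, 0 ≤ g n)
    (hfg : ∀ n, f n ≤ g n - g (n + 1)) : ∑' n, f n ≤ g 0 :=
  Real.tsum_le_of_sum_range_le hf fun n => by
    have := Finset.sum_le_sum fun i (_ : i ∈ Finset.range n) => hfg i
    rw [Finset.sum_range_sub'] at this
    linarith [hg n]

namespace Antitone

variable {f : ℕ → ℝ} {p : ℝ}

lemma succ_mul_le_tsum (hf : Antitone f) (h0 : ∀ n, 0 ≤ f n) (hs : Summable f) (n : ℕ) :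
    ((n : ℝ) + 1) * f n ≤ ∑' k, f k :=
  calc ((n : ℝ) + 1) * f n = ∑ _k ∈ Finset.range (n + 1), f n := by simp
    _ ≤ ∑ k ∈ Finset.range (n + 1), f k :=
      Finset.sum_le_sum fun k hk => hf (Nat.lt_succ_iff.mp (Finset.mem_range.mp hk))
    _ ≤ ∑' k, f k := hs.sum_le_tsum _ fun k _ => h0 k

lemma rpow_const (hf : Antitone f) (h0 : ∀ n, 0 ≤ f n) (hp : 0 ≤ p) : Antitone fun n => f n ^ p :=
  fun _ _ h => rpow_le_rpow (h0 _) (hf h) hp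

lemma le_tsum_rpow_rpow_mul (hf : Antitone f) (h0 : ∀ n, 0 ≤ f n) (hp : 0 < p)
    (hs : Summable fun n => f n ^ p) (n : ℕ) :
    f n ≤ (∑' k, f k ^ p) ^ (1 / p) * ((n : ℝ) + 1) ^ (-(1 / p)) := by
  have hn : (0 : ℝ) < n + 1 := by positivity
  have hfp : f n ^ p ≤ (∑' k, f k ^ p) / (n + 1) := by
    rw [le_div_iff₀ hn, mul_comm]
    exact (hf.rpow_const h0 hp.le).succ_mul_le_tsum (fun k => rpow_nonneg (h0 k) p) hs n
  calc f n = (f n ^ p) ^ (1 / p) := by rw [← rpow_mul (h0 n), mul_one_div_cancel hp.ne', rpow_one]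
    _ ≤ ((∑' k, f k ^ p) / (n + 1)) ^ (1 / p) :=
      rpow_le_rpow (rpow_nonneg (h0 n) p) hfp (by positivity)
    _ = _ := by
      rw [div_rpow (tsum_nonneg fun k => rpow_nonneg (h0 k) p) hn.le, rpow_neg hn.le,
        div_eq_mul_inv]

lemma tsum_nat_add_le_rpow_mul_tsum_rpow (hf : Antitone f) (h0 : ∀ n, 0 ≤ f n) (hp1 : p ≤ 1)
    (hs : Summable fun n => f n ^ p) (s : ℕ) :
    ∑' k, f (s + k) ≤ f s ^ (1 - p) * ∑' k, f k ^ p := by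
  have hpoint : ∀ k, f (s + k) ≤ f s ^ (1 - p) * f (s + k) ^ p := fun k =>
    calc f (s + k) = f (s + k) ^ (1 - p) * f (s + k) ^ p := by
          rw [← rpow_add' (h0 _) (by simp)]; simp
      _ ≤ f s ^ (1 - p) * f (s + k) ^ p :=
          mul_le_mul_of_nonneg_right (rpow_le_rpow (h0 _) (hf (Nat.le_add_right s k))
            (by linarith)) (rpow_nonneg (h0 _) p)
  have hs_tail : Summable fun k => f (s + k) ^ p := by
    simpa only [add_comm s] using (summable_nat_add_iff s).2 hs
  have hmaj := hs_tail.mul_left (f s ^ (1 - p))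
  calc ∑' k, f (s + k) ≤ ∑' k, f s ^ (1 - p) * f (s + k) ^ p :=
        (hmaj.of_nonneg_of_le (fun k => h0 _) hpoint).tsum_le_tsum hpoint hmaj
    _ = f s ^ (1 - p) * ∑' k, f (s + k) ^ p := tsum_mul_left
    _ ≤ f s ^ (1 - p) * ∑' k, f k ^ p := by
      refine mul_le_mul_of_nonneg_left ?_ (rpow_nonneg (h0 s) _)
      exact hs_tail.tsum_le_tsum_of_inj (s + ·) (add_right_injective s)
        (fun k _ => rpow_nonneg (h0 k) p) (fun k => le_rfl) hs

lemma tsum_nat_add_le_tsum_rpow_rpow_mul (hf : Antitone f) (h0 : ∀ n, 0 ≤ f n) (hp : 0 < p)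
    (hp1 : p ≤ 1) (hs : Summable fun n => f n ^ p) (s : ℕ) :
    ∑' k, f (s + k) ≤ (∑' k, f k ^ p) ^ (1 / p) * ((s : ℝ) + 1) ^ (-(1 / p - 1)) := by
  set T := ∑' k, f k ^ p
  have hT : 0 ≤ T := tsum_nonneg fun k => rpow_nonneg (h0 k) p
  have hs1 : (0 : ℝ) ≤ s + 1 := by positivity
  calc ∑' k, f (s + k) ≤ f s ^ (1 - p) * T := hf.tsum_nat_add_le_rpow_mul_tsum_rpow h0 hp1 hs s
    _ ≤ (T ^ (1 / p) * ((s : ℝ) + 1) ^ (-(1 / p))) ^ (1 - p) * T :=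
      mul_le_mul_of_nonneg_right
        (rpow_le_rpow (h0 s) (hf.le_tsum_rpow_rpow_mul h0 hp hs s) (by linarith)) hT
    _ = T ^ (1 / p * (1 - p)) * T * ((s : ℝ) + 1) ^ (-(1 / p) * (1 - p)) := by
      rw [mul_rpow (by positivity) (by positivity), ← rpow_mul hT, ← rpow_mul hs1]
      ring
    _ = T ^ (1 / p) * ((s : ℝ) + 1) ^ (-(1 / p - 1)) := by
      have hexp : 1 / p * (1 - p) + 1 = 1 / p := by field_simp; ring
      have hexp' : -(1 / p) * (1 - p) = -(1 / p - 1) := by field_simp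
      rw [← rpow_add_one' hT (by rw [hexp]; positivity), hexp, hexp']

lemma tsum_nat_add_le_div_mul_tsum_rpow_rpow_mul (hf : Antitone f) (h0 : ∀ n, 0 ≤ f n)
    (hp : 0 < p) (hp1 : p < 1) (hs : Summable fun n => f n ^ p) {s : ℕ} (hs1 : 1 ≤ s) :
    ∑' k, f (s + k) ≤
      1 / (1 / p - 1) * (∑' k, f k ^ p) ^ (1 / p) * (s : ℝ) ^ (-(1 / p - 1)) := by
  set r := 1 / p - 1
  have hr : 0 < r := by have := one_lt_one_div hp hp1; linarith
  set C := 1 / r * (∑' k, f k ^ p) ^ (1 / p)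
  have hC : 0 ≤ C := by
    have : 0 ≤ ∑' k, f k ^ p := tsum_nonneg fun k => rpow_nonneg (h0 k) p
    positivity
  have hpos : ∀ k : ℕ, (0 : ℝ) < s + k := fun k => by
    have : (1 : ℝ) ≤ s := by exact_mod_cast hs1
    positivity
  simpa using tsum_le_of_le_sub_succ (g := fun k => C * ((s : ℝ) + k) ^ (-r))
    (fun k => h0 _) (fun k => mul_nonneg hC (rpow_nonneg (hpos k).le _)) fun k => by
      have hbound := hf.le_tsum_rpow_rpow_mul h0 hp hs (s + k)
      have htele := mul_rpow_neg_add_one_le_rpow_neg_sub (hpos k) hr.le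
      rw [show -(1 / p) = -(r + 1) by ring] at hbound
      push_cast at hbound ⊢
      calc f (s + k) ≤ (∑' k, f k ^ p) ^ (1 / p) * ((s : ℝ) + k + 1) ^ (-(r + 1)) := hbound
        _ = C * (r * ((s : ℝ) + k + 1) ^ (-(r + 1))) := by simp only [C]; field_simp
        _ ≤ C * ((s : ℝ) + k) ^ (-r) - C * ((s : ℝ) + (k + 1)) ^ (-r) := by
          rw [← mul_sub, ← add_assoc]
          exact mul_le_mul_of_nonneg_left htele hC

end Antitone

/-- Tail bound for a non-increasing `p`-summable sequence (`β j` denotes `β_{j+1}`):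
`∑_{j ≥ s+1} β_j ≤ min(1/(1/p-1), 1) (∑_{j≥1} β_j^p)^{1/p} s^{-(1/p-1)}`. -/
theorem tail_sum_bound (β : ℕ → ℝ) (p : ℝ) (hp : 0 < p) (hp1 : p < 1)
    (hnn : ∀ j, 0 ≤ β j) (hmono : ∀ j k, j ≤ k → β k ≤ β j)
    (hsum : Summable fun j => β j ^ p) (s : ℕ) (hs : 1 ≤ s) :
    ∑' j : ℕ, β (s + j)
      ≤ min (1 / (1 / p - 1)) 1 * (∑' j : ℕ, β j ^ p) ^ (1 / p) *
        (s : ℝ) ^ (-(1 / p - 1)) := by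
  have hβ : Antitone β := fun j k => hmono j k
  have hB : 0 ≤ (∑' j : ℕ, β j ^ p) ^ (1 / p) :=
    rpow_nonneg (tsum_nonneg fun j => rpow_nonneg (hnn j) p) _
  have hs0 : (0 : ℝ) < s := by exact_mod_cast hs
  rw [min_mul_of_nonneg _ _ hB, min_mul_of_nonneg _ _ (rpow_nonneg hs0.le _), one_mul]
  refine le_min (hβ.tsum_nat_add_le_div_mul_tsum_rpow_rpow_mul hnn hp hp1 hsum hs) ?_
  calc ∑' j : ℕ, β (s + j)
      ≤ (∑' j : ℕ, β j ^ p) ^ (1 / p) * ((s : ℝ) + 1) ^ (-(1 / p - 1)) :=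
        hβ.tsum_nat_add_le_tsum_rpow_rpow_mul hnn hp hp1.le hsum s
    _ ≤ (∑' j : ℕ, β j ^ p) ^ (1 / p) * (s : ℝ) ^ (-(1 / p - 1)) := by
      have : 0 < 1 / p - 1 := by have := one_lt_one_div hp hp1; linarith
      exact mul_le_mul_of_nonneg_left (rpow_le_rpow_of_nonpos hs0 (by linarith) (by linarith)) hB
end
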